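/- Let n ≥ 3 and let A be an n×n complex matrix with upper-left (n−1)×(n−1) submatrix A^(n-1) and upper-left (n−2)×(n−2) submatrix A^(n-2). Assume det(A^(n-1) − x·Id) = ∏_{l=1}^{n-1}(λ_l − x) with pairwise distinct λ_1,…,λ_{n-1}, and assume that no λ_i is an eigenvalue of A^(n-2). Define 𝒫_{jk} = (−1)^{j+k} · det of the submatrix of A^(n-1) − λ_k·Id obtained by deleting row n−1 and column j, 𝒬_{ij} = (−1)^{i+j} · det of the submatrix of A^(n-1) − λ_i·Id obtained by deleting row j and column n−1, and D_i = ∏_{l≠i}(λ_l − λ_i) · det(A^(n-2) − λ_i·Id_{n-2}). Then for each 1 ≤ i ≤ n−1 the spectral projection pr_i := ∏_{l≠i}(A^(n-1) − λ_l·Id)/(λ_i − λ_l) admits the rank-one factorization (pr_i)_{kj} = 𝒫_{ki} · 𝒬_{ij} / D_i for all 1 ≤ k, j ≤ n−1. -/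

import Mathlib

open Matrix Finset Polynomial

noncomputable section

/-- The Lagrange spectral projection `pr_i = ∏_{l≠i} (B − λ_l·Id)/(λ_i − λ_l)`,
realized as the evaluation at `B` of the corresponding polynomial. -/
def lagrangePr (k : ℕ) (B : Matrix (Fin (k+1)) (Fin (k+1)) ℂ)
    (lam : Fin (k+1) → ℂ) (i : Fin (k+1)) : Matrix (Fin (k+1)) (Fin (k+1)) ℂ :=
  Polynomial.aeval B
    (∏ l ∈ Finset.univ.erase i,
      (Polynomial.C (lam i - lam l)⁻¹ * (Polynomial.X - Polynomial.C (lam l))))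

/-!
Write `M = B - λ_i • 1` and `pr_j = aeval B (Lagrange.basis univ λ j)`. Since `B` kills its
characteristic polynomial `∏ (X - λ_l)`, we have `B * pr_j = λ_j • pr_j` and `∑ pr_j = 1`, so the
polynomial matrix `∑_j ∏_{l ≠ j} (X - λ_l) • pr_j` is a right inverse of `X - B` up to the factor
`det (X - B)`; hence it is the adjugate of the characteristic matrix. Evaluating at `X = λ_i` gives
`adj M = ∏_{l ≠ i} (λ_l - λ_i) • pr_i`.

On the other hand `det M = 0`, so every row of `adj M` lies in the left kernel of `M`, which is a
line because the upper-left corner `A^(n-2) - λ_i • 1` of `M` is invertible. So `adj M` has rank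
one: `adj_{LL} adj_{kj} = adj_{kL} adj_{Lj}` for the last index `L`. The corner entry `adj_{LL}`
is `det (A^(n-2) - λ_i • 1)`, while `adj_{kL}` and `adj_{Lj}` are, up to signs that cancel in the
product, the minors `𝒫_{ki}` and `𝒬_{ij}`.
-/

open Lagrange

theorem neg_one_pow_add_mul_neg_one_pow_add {R : Type*} [Monoid R] [HasDistribNeg R]
    (a b c : ℕ) : (-1 : R) ^ (a + b) * (-1) ^ (b + c) = (-1) ^ (a + c) := by
  rw [← pow_add, show a + b + (b + c) = a + c + 2 * b by ring, pow_add, pow_mul, neg_one_sq,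
    one_pow, mul_one]

namespace Matrix

section CommRing

variable {R ι : Type*} [CommRing R] [Fintype ι] [DecidableEq ι]

theorem eq_adjugate_of_mul_eq_det_smul [IsDomain R] {A G : Matrix ι ι R} (hA : A.det ≠ 0)
    (h : A * G = A.det • 1) : G = adjugate A := by
  have hsmul : A.det • G = A.det • adjugate A :=
    calc A.det • G = adjugate A * A * G := by rw [adjugate_mul, Matrix.smul_mul, Matrix.one_mul]
      _ = A.det • adjugate A := by rw [Matrix.mul_assoc, h, Matrix.mul_smul, Matrix.mul_one]
  ext a b
  exact mul_left_cancel₀ hA (congrFun (congrFun hsmul a) b)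

theorem mapMatrix_evalRingHom_charmatrix (B : Matrix ι ι R) (x : R) :
    (evalRingHom x).mapMatrix (charmatrix B) = scalar ι x - B := by
  ext a b
  obtain rfl | hab := eq_or_ne a b <;> simp [*]

theorem mapMatrix_evalRingHom_smul_mapMatrix_C (x : R) (p : R[X]) (P : Matrix ι ι R) :
    (evalRingHom x).mapMatrix (p • C.mapMatrix P) = eval x p • P := by
  ext
  simp

end CommRing

section RankOne

variable {R : Type*} [CommRing R] {n : ℕ} (M : Matrix (Fin (n+1)) (Fin (n+1)) R)

theorem eq_zero_of_vecMul_eq_zero_of_last_eq_zero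
    (hM : IsUnit (M.submatrix Fin.castSucc Fin.castSucc)) {w : Fin (n+1) → R}
    (hw : w ᵥ* M = 0) (hlast : w (Fin.last n) = 0) : w = 0 := by
  have hinit : (w ∘ Fin.castSucc) ᵥ* M.submatrix Fin.castSucc Fin.castSucc = 0 := by
    ext j
    simpa [vecMul, dotProduct, Fin.sum_univ_castSucc, hlast] using congrFun hw j.castSucc
  have hzero : w ∘ Fin.castSucc = 0 :=
    vecMul_injective_of_isUnit hM (hinit.trans (zero_vecMul _).symm)
  funext a
  exact Fin.lastCases hlast (fun b => congrFun hzero b) a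

theorem adjugate_last_last :
    adjugate M (Fin.last n) (Fin.last n) = (M.submatrix Fin.castSucc Fin.castSucc).det := by
  rw [adjugate_fin_succ_eq_det_submatrix, Fin.succAbove_last, ← two_mul, pow_mul, neg_one_sq,
    one_pow, one_mul]

theorem adjugate_last_mul_adjugate_last (a : ℕ) (k j : Fin (n+1)) :
    adjugate M k (Fin.last n) * adjugate M (Fin.last n) j
      = (-1) ^ (k.val + a) * (M.submatrix (Fin.last n).succAbove k.succAbove).det
        * ((-1) ^ (a + j.val) * (M.submatrix j.succAbove (Fin.last n).succAbove).det) := by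
  have hsign : (-1 : R) ^ ((Fin.last n).val + k.val) * (-1) ^ (j.val + (Fin.last n).val)
      = (-1) ^ (k.val + a) * (-1) ^ (a + j.val) := by
    rw [add_comm _ k.val, add_comm j.val, neg_one_pow_add_mul_neg_one_pow_add,
      neg_one_pow_add_mul_neg_one_pow_add]
  rw [adjugate_fin_succ_eq_det_submatrix, adjugate_fin_succ_eq_det_submatrix, mul_mul_mul_comm,
    hsign, mul_mul_mul_comm]

theorem det_submatrix_castSucc_mul_adjugate (hdet : M.det = 0)
    (hM : IsUnit (M.submatrix Fin.castSucc Fin.castSucc)) (k j : Fin (n+1)) :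
    (M.submatrix Fin.castSucc Fin.castSucc).det * adjugate M k j
      = adjugate M k (Fin.last n) * adjugate M (Fin.last n) j := by
  have hker : ∀ r, adjugate M r ᵥ* M = 0 := fun r => by
    have h := congrFun (adjugate_mul M) r
    rwa [hdet, zero_smul] at h
  rw [← adjugate_last_last M]
  set w := adjugate M (Fin.last n) (Fin.last n) • adjugate M k
    - adjugate M k (Fin.last n) • adjugate M (Fin.last n)
  have hw : w = 0 := by
    refine eq_zero_of_vecMul_eq_zero_of_last_eq_zero M hM ?_ ?_
    · simp [w, sub_vecMul, smul_vecMul, hker]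
    · simp [w, mul_comm]
  simpa [w, sub_eq_zero] using congrFun hw j

end RankOne

section SpectralProjection

variable {K ι : Type*} [Field K] [Fintype ι] [DecidableEq ι] (B : Matrix ι ι K) {lam : ι → K}

theorem charpoly_eq_nodal_of_det_sub_smul [Infinite K]
    (h : ∀ x : K, (B - x • 1).det = ∏ l, (lam l - x)) : B.charpoly = nodal univ lam := by
  refine Polynomial.funext fun x => ?_
  have hneg : scalar ι x - B = -(B - x • 1) := by rw [neg_sub, smul_one_eq_diagonal, scalar_apply]
  simp_rw [eval_charpoly, eval_nodal, hneg, det_neg, h, ← neg_sub (lam _) x, prod_neg, card_univ]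

theorem mul_aeval_basis_eq_smul (h : B.charpoly = nodal univ lam) (i : ι) :
    B * aeval B (Lagrange.basis univ lam i) = lam i • aeval B (Lagrange.basis univ lam i) := by
  have hdvd : (X - C (lam i)) * Lagrange.basis univ lam i
      = C (nodalWeight univ lam i) * nodal univ lam := by
    rw [basis_eq_prod_sub_inv_mul_nodal_div (mem_univ i), ← nodal_erase_eq_nodal_div (mem_univ i),
      mul_left_comm, ← nodal_eq_mul_nodal_erase (mem_univ i)]
  have := congrArg (aeval B) hdvd
  rwa [map_mul, map_mul, ← h, aeval_self_charpoly, mul_zero, map_sub, aeval_X, aeval_C, sub_mul,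
    sub_eq_zero, ← Algebra.smul_def] at this

theorem sum_aeval_basis (hlam : Function.Injective lam) :
    ∑ j, aeval B (Lagrange.basis univ lam j) = 1 := by
  rcases isEmpty_or_nonempty ι with _ | _
  · exact Subsingleton.elim _ _
  · rw [← map_sum, Lagrange.sum_basis hlam.injOn univ_nonempty, map_one]

theorem charmatrix_mul_mapMatrix_aeval_basis (h : B.charpoly = nodal univ lam) (i : ι) :
    charmatrix B * C.mapMatrix (aeval B (Lagrange.basis univ lam i))
      = (X - C (lam i)) • C.mapMatrix (aeval B (Lagrange.basis univ lam i)) := by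
  rw [charmatrix, sub_mul, ← map_mul, mul_aeval_basis_eq_smul B h, sub_smul, scalar_apply]
  congr 1
  · rw [smul_eq_diagonal_mul]
  · ext
    simp

theorem adjugate_charmatrix_eq_sum (hlam : Function.Injective lam)
    (h : B.charpoly = nodal univ lam) :
    adjugate (charmatrix B)
      = ∑ j, nodal (univ.erase j) lam • C.mapMatrix (aeval B (Lagrange.basis univ lam j)) := by
  refine (eq_adjugate_of_mul_eq_det_smul B.charpoly_monic.ne_zero ?_).symm
  calc charmatrix B
        * ∑ j, nodal (univ.erase j) lam • C.mapMatrix (aeval B (Lagrange.basis univ lam j))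
      = ∑ j, nodal univ lam • C.mapMatrix (aeval B (Lagrange.basis univ lam j)) := by
        simp_rw [mul_sum, Matrix.mul_smul, charmatrix_mul_mapMatrix_aeval_basis B h, smul_smul,
          mul_comm _ (X - C _), ← nodal_eq_mul_nodal_erase (mem_univ _)]
    _ = (charmatrix B).det • 1 := by
        rw [← smul_sum, ← map_sum, sum_aeval_basis B hlam, map_one, ← h, charpoly]

theorem adjugate_scalar_sub_eq (hlam : Function.Injective lam) (h : B.charpoly = nodal univ lam)
    (i : ι) :
    adjugate (scalar ι (lam i) - B)
      = eval (lam i) (nodal (univ.erase i) lam) • aeval B (Lagrange.basis univ lam i) := by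
  have := congrArg (evalRingHom (lam i)).mapMatrix (adjugate_charmatrix_eq_sum B hlam h)
  rw [RingHom.map_adjugate, mapMatrix_evalRingHom_charmatrix, map_sum] at this
  simp_rw [this, mapMatrix_evalRingHom_smul_mapMatrix_C]
  refine sum_eq_single i (fun j _ hji => ?_) (by simp)
  rw [eval_nodal_at_node (mem_erase.mpr ⟨hji.symm, mem_univ i⟩), zero_smul]

theorem adjugate_sub_smul_one_eq (hlam : Function.Injective lam)
    (h : B.charpoly = nodal univ lam) (i : ι) :
    adjugate (B - lam i • 1)
      = (∏ l ∈ univ.erase i, (lam l - lam i)) • aeval B (Lagrange.basis univ lam i) := by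
  have hneg : B - lam i • 1 = (-1 : K) • (scalar ι (lam i) - B) := by
    rw [neg_one_smul, neg_sub, smul_one_eq_diagonal, scalar_apply]
  rw [hneg, adjugate_smul, adjugate_scalar_sub_eq B hlam h, smul_smul, eval_nodal]
  simp_rw [← neg_sub (lam i), prod_neg, card_erase_of_mem (mem_univ i), card_univ]

end SpectralProjection

end Matrix

/-- rank-one factorization `(pr_i)_{kj} = 𝒫_{ki}·𝒬_{ij}/D_i` of the
spectral projections of the upper-left `(n−1) × (n−1)` submatrix of `A`
(here `n = m+3 ≥ 3`). -/
theorem stmt11 (m : ℕ) (A : Matrix (Fin (m+3)) (Fin (m+3)) ℂ)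
    (lam : Fin (m+2) → ℂ) (hdist : Function.Injective lam)
    (hchar : ∀ x : ℂ,
      (A.submatrix Fin.castSucc Fin.castSucc
        - x • (1 : Matrix (Fin (m+2)) (Fin (m+2)) ℂ)).det = ∏ l, (lam l - x))
    (hspec : ∀ i : Fin (m+2),
      lam i ∉ spectrum ℂ
        (A.submatrix (Fin.castLE (show m+1 ≤ m+3 by omega))
          (Fin.castLE (show m+1 ≤ m+3 by omega)))) :
    -- `B = A^(n-1)`, `B2 = A^(n-2)`
    let B : Matrix (Fin (m+2)) (Fin (m+2)) ℂ := A.submatrix Fin.castSucc Fin.castSucc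
    let B2 : Matrix (Fin (m+1)) (Fin (m+1)) ℂ :=
      A.submatrix (Fin.castLE (show m+1 ≤ m+3 by omega)) (Fin.castLE (show m+1 ≤ m+3 by omega))
    -- 𝒫_{jk} = (−1)^{j+k} · minor of `B − λ_k·Id` deleting row n−1 and column j
    let P : Matrix (Fin (m+2)) (Fin (m+2)) ℂ := fun j k =>
      (-1 : ℂ) ^ (j.val + k.val) *
        ((B - lam k • 1).submatrix (Fin.last (m+1)).succAbove j.succAbove).det
    -- 𝒬_{ij} = (−1)^{i+j} · minor of `B − λ_i·Id` deleting row j and column n−1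
    let Q : Matrix (Fin (m+2)) (Fin (m+2)) ℂ := fun i j =>
      (-1 : ℂ) ^ (i.val + j.val) *
        ((B - lam i • 1).submatrix j.succAbove (Fin.last (m+1)).succAbove).det
    let D : Fin (m+2) → ℂ := fun i =>
      (∏ l ∈ Finset.univ.erase i, (lam l - lam i)) * (B2 - lam i • 1).det
    ∀ (i k j : Fin (m+2)), lagrangePr (m+1) B lam i k j = P k i * Q i j / D i := by
  intro B B2 P Q D i k j
  set M := B - lam i • 1
  have hcorner : M.submatrix Fin.castSucc Fin.castSucc = B2 - lam i • 1 := by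
    ext a b
    simp only [M, B, B2, submatrix_apply, Matrix.sub_apply, Matrix.smul_apply, one_apply,
      Fin.castSucc_inj]
    rfl
  have hunit : IsUnit (B2 - lam i • 1) := by
    simpa [Algebra.algebraMap_eq_smul_one] using (spectrum.notMem_iff.mp (hspec i)).neg
  have hdet : M.det = 0 := by
    rw [hchar]
    exact prod_eq_zero (mem_univ i) (sub_self _)
  have hadj : adjugate M = (∏ l ∈ univ.erase i, (lam l - lam i)) • lagrangePr (m+1) B lam i :=
    adjugate_sub_smul_one_eq B hdist (charpoly_eq_nodal_of_det_sub_smul B hchar) i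
  have hD : D i ≠ 0 := by
    refine mul_ne_zero (prod_ne_zero_iff.mpr fun l hl => sub_ne_zero.mpr ?_)
      ((isUnit_iff_isUnit_det _).mp hunit).ne_zero
    exact hdist.ne (mem_erase.mp hl).1
  have hrank := det_submatrix_castSucc_mul_adjugate M hdet (hcorner ▸ hunit) k j
  rw [adjugate_last_mul_adjugate_last M i.val, hcorner, hadj] at hrank
  rw [eq_div_iff hD, ← hrank]
  simp only [D, Matrix.smul_apply, smul_eq_mul]
  ring
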